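/- Let f be a non-zero vector of a metric vector space (V,Q) such that f ∈ V^⊥ and Q(f) = 0, and put n := dim V and k := dim V^⊥. Then the cardinalities satisfy |ΔO(V,Q,f)| = |F^×| · |F|^{n−1} and |ΔO'(V,Q,f)| = |F|^{n−k}, where F^× := F \ {0}. -/
import Mathlib

universe u v

variable {F : Type u} {V : Type v} [Field F] [AddCommGroup V] [Module F V] [FiniteDimensional F V]

/-- The map `δ_{c*,f} : x ↦ x + ⟨c*,x⟩ • f`. -/
def deltaMap (c : Module.Dual F V) (f : V) : V →ₗ[F] V :=
  LinearMap.id + c.smulRight f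

/-- The orthogonal group `O(V,Q)`, as a set of linear endomorphisms. -/
def orthSet (Q : QuadraticForm F V) : Set (V →ₗ[F] V) :=
  {φ | Function.Bijective φ ∧ ∀ x, Q (φ x) = Q x}

/-- The weak orthogonal group `O'(V,Q)`: isometries fixing the radical elementwise. -/
def wOrthSet (Q : QuadraticForm F V) : Set (V →ₗ[F] V) :=
  {φ | Function.Bijective φ ∧ (∀ x, Q (φ x) = Q x) ∧
    ∀ x ∈ LinearMap.ker Q.polarBilin, φ x = x}

/-- The group `Δ(V,f) = {δ_{a*,f} : a* ∈ V*, ⟨a*,f⟩ ≠ -1}`. -/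
def deltaSet (f : V) : Set (V →ₗ[F] V) :=
  {φ | ∃ a : Module.Dual F V, a f ≠ -1 ∧ φ = deltaMap a f}

set_option linter.unusedSectionVars false

@[simp] lemma deltaMap_apply (c : Module.Dual F V) (f x : V) :
    deltaMap c f x = x + c x • f := rfl

lemma delta_inj {f : V} (hf : f ≠ 0) {a b : Module.Dual F V}
    (h : deltaMap a f = deltaMap b f) : a = b := by
  ext x
  have h1 := LinearMap.congr_fun h x
  simp only [deltaMap_apply, add_right_inj] at h1
  exact smul_left_injective F hf h1

lemma delta_comp (a b : Module.Dual F V) (f x : V) :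
    deltaMap b f (deltaMap a f x) = x + (a x + b x + a x * b f) • f := by
  simp only [deltaMap_apply, map_add, map_smul, smul_eq_mul, add_smul, mul_smul]
  module

lemma delta_mem_orth (Q : QuadraticForm F V) {f : V}
    (hfrad : f ∈ LinearMap.ker Q.polarBilin) (hQf : Q f = 0)
    {a : Module.Dual F V} (ha : a f ≠ -1) : deltaMap a f ∈ orthSet Q := by
  have hpol : ∀ x, QuadraticMap.polar Q x f = 0 := by
    intro x
    rw [LinearMap.mem_ker] at hfrad
    have := LinearMap.congr_fun hfrad x
    simpa [QuadraticMap.polar_comm _ x f] using this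
  have hone : (1 : F) + a f ≠ 0 := fun h => ha (by linear_combination h)
  constructor
  · rw [Function.bijective_iff_has_inverse]
    set b : Module.Dual F V := -(1 + a f)⁻¹ • a with hb
    have hbx : ∀ x : V, b x = -(1 + a f)⁻¹ * a x := fun x => rfl
    refine ⟨deltaMap b f, fun x => ?_, fun x => ?_⟩
    · rw [delta_comp]
      have : a x + b x + a x * b f = 0 := by
        simp only [hbx]; field_simp; ring
      rw [this, zero_smul, add_zero]
    · rw [delta_comp]
      have : b x + a x + b x * a f = 0 := by
        simp only [hbx]; field_simp; ring
      rw [this, zero_smul, add_zero]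
  · intro x
    simp only [deltaMap_apply]
    rw [QuadraticMap.map_add (⇑Q) x (a x • f), QuadraticMap.map_smul,
      QuadraticMap.polar_smul_right, hpol x, hQf]
    simp

lemma exists_dual_one {f : V} (hf : f ≠ 0) : ∃ s : Module.Dual F V, s f = 1 := by
  have h : ¬ ∀ φ : Module.Dual F V, φ f = 0 := by
    rw [Module.forall_dual_apply_eq_zero_iff F f]; exact hf
  push_neg at h
  obtain ⟨s0, hs0⟩ := h
  exact ⟨(s0 f)⁻¹ • s0, by simp [inv_mul_cancel₀ hs0]⟩

/-- The dual annihilator of a subspace `W` is equivalent to `F^(n-k)`. -/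
noncomputable def annEquiv (W : Submodule F V) :
    ↥(W.dualAnnihilator) ≃
      (Fin (Module.finrank F V - Module.finrank F ↥W) → F) := by
  have hd : Module.finrank F (Module.Dual F (V ⧸ W)) =
      Module.finrank F V - Module.finrank F ↥W := by
    rw [Subspace.dual_finrank_eq]
    have h1 := W.finrank_quotient_add_finrank
    have h2 := W.finrank_le
    omega
  exact (Submodule.dualQuotEquivDualAnnihilator W).symm.toEquiv.trans
    ((Module.finBasis F (Module.Dual F (V ⧸ W))).equivFun.toEquiv.trans
      (Equiv.arrowCongr (finCongr hd) (Equiv.refl F)))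

/-- Lemma 3.1(d), second part. -/
theorem stmt4 (Q : QuadraticForm F V) (f : V) (hf : f ≠ 0)
    (hfrad : f ∈ LinearMap.ker Q.polarBilin) (hQf : Q f = 0) :
    Cardinal.lift.{u} (Cardinal.mk ↥(deltaSet f ∩ orthSet Q)) =
      Cardinal.lift.{v} (Cardinal.mk {c : F // c ≠ 0} *
        Cardinal.mk F ^ (Module.finrank F V - 1)) ∧
    Cardinal.lift.{u} (Cardinal.mk ↥(deltaSet f ∩ wOrthSet Q)) =
      Cardinal.lift.{v} (Cardinal.mk F ^
        (Module.finrank F V - Module.finrank F ↥(LinearMap.ker Q.polarBilin))) := by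
  classical
  obtain ⟨s, hs⟩ := exists_dual_one (F := F) hf
  set R : Submodule F V := LinearMap.ker Q.polarBilin with hR
  -- membership in the annihilator of span {f}
  have hmem : ∀ a : Module.Dual F V,
      a ∈ (Submodule.span F {f}).dualAnnihilator ↔ a f = 0 := by
    intro a
    rw [Submodule.mem_dualAnnihilator]
    constructor
    · exact fun h => h f (Submodule.mem_span_singleton_self f)
    · rintro h0 w hw
      obtain ⟨c, rfl⟩ := Submodule.mem_span_singleton.mp hw
      simp [h0]
  constructor
  · -- part 1
    have e1 : {a : Module.Dual F V // a f ≠ -1} ≃ ↥(deltaSet f ∩ orthSet Q) := by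
      refine Equiv.ofBijective
        (fun a => ⟨deltaMap a.1 f, ⟨a.1, a.2, rfl⟩, delta_mem_orth Q hfrad hQf a.2⟩) ⟨?_, ?_⟩
      · intro a b hab
        exact Subtype.ext (delta_inj hf (congrArg Subtype.val hab))
      · rintro ⟨φ, ⟨a, ha, rfl⟩, -⟩
        exact ⟨⟨a, ha⟩, rfl⟩
    have e2 : {a : Module.Dual F V // a f ≠ -1} ≃
        ({c : F // c ≠ -1} × ↥((Submodule.span F {f}).dualAnnihilator)) := by
      refine ⟨fun a => (⟨a.1 f, a.2⟩, ⟨a.1 - a.1 f • s, (hmem _).mpr (by simp [hs])⟩),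
        fun p => ⟨p.2.1 + p.1.1 • s, ?_⟩, fun a => ?_, fun p => ?_⟩
      · have hp : p.2.1 f = 0 := (hmem _).mp p.2.2
        simpa [hp, hs] using p.1.2
      · apply Subtype.ext; simp
      · have hp : p.2.1 f = 0 := (hmem _).mp p.2.2
        refine Prod.ext (Subtype.ext ?_) (Subtype.ext ?_) <;> simp [hp, hs]
    have e3 : {c : F // c ≠ -1} ≃ {c : F // c ≠ 0} :=
      ⟨fun c => ⟨c.1 + 1, fun h => c.2 (by linear_combination h)⟩,
       fun c => ⟨c.1 - 1, fun h => c.2 (by linear_combination h)⟩,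
       fun c => by simp, fun c => by simp⟩
    have hspan : Module.finrank F ↥(Submodule.span F {f}) = 1 :=
      finrank_span_singleton hf
    have e4 : ↥((Submodule.span F {f}).dualAnnihilator) ≃
        (Fin (Module.finrank F V - 1) → F) := by
      have := annEquiv (Submodule.span F {f})
      rwa [hspan] at this
    have etot : ↥(deltaSet f ∩ orthSet Q) ≃
        ({c : F // c ≠ 0} × (Fin (Module.finrank F V - 1) → F)) :=
      e1.symm.trans (e2.trans (Equiv.prodCongr e3 e4))
    rw [Cardinal.lift_mk_eq'.mpr ⟨etot⟩]
    congr 1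
    simp [Cardinal.mk_prod, Cardinal.mk_arrow, Cardinal.power_natCast]
  · -- part 2
    have e5 : ↥(R.dualAnnihilator) ≃ ↥(deltaSet f ∩ wOrthSet Q) := by
      have key : ∀ a : Module.Dual F V, a ∈ R.dualAnnihilator → a f ≠ -1 := by
        intro a ha
        have h0 : a f = 0 := (Submodule.mem_dualAnnihilator a).mp ha f hfrad
        rw [h0]
        intro h
        exact one_ne_zero (α := F) (by linear_combination h)
      refine Equiv.ofBijective (fun a => ⟨deltaMap a.1 f, ⟨a.1, key a.1 a.2, rfl⟩, ?_, ?_, ?_⟩)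
        ⟨?_, ?_⟩
      · exact (delta_mem_orth Q hfrad hQf (key a.1 a.2)).1
      · exact (delta_mem_orth Q hfrad hQf (key a.1 a.2)).2
      · intro x hx
        have h0 : a.1 x = 0 := (Submodule.mem_dualAnnihilator a.1).mp a.2 x hx
        simp [h0]
      · intro a b hab
        exact Subtype.ext (delta_inj hf (congrArg Subtype.val hab))
      · rintro ⟨φ, ⟨a, ha, rfl⟩, -, -, hfix⟩
        refine ⟨⟨a, (Submodule.mem_dualAnnihilator a).mpr fun w hw => ?_⟩, rfl⟩
        have := hfix w hw
        simp only [deltaMap_apply] at this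
        have h2 : a w • f = 0 := by
          have := congrArg (fun z => z - w) this
          simpa using this
        rcases smul_eq_zero.mp h2 with h3 | h3
        · exact h3
        · exact absurd h3 hf
    have etot : ↥(deltaSet f ∩ wOrthSet Q) ≃
        (Fin (Module.finrank F V - Module.finrank F ↥R) → F) :=
      e5.symm.trans (annEquiv R)
    rw [Cardinal.lift_mk_eq'.mpr ⟨etot⟩]
    congr 1
    simp [Cardinal.mk_arrow, Cardinal.power_natCast]
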